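/- Define the mean-field bias B(M/N, M'/N') = θ*(M/N) − θ*(M'/N') where θ* is the fluid-limit treatment effect. If both M/N ≥ r and M'/N' ≥ r, then B = 0. If M/N < r ≤ M'/N', then B = (M/N)·μp/(λ+τ) − λμp/((λ+τ)(λ+τ+μp)) < 0 (the experiment underestimates the scaled-up effect). If M/N < r and M'/N' < r with M/N < M'/N', then B = ((M/N) − (M'/N'))·μp/(λ+τ) < 0. -/
import Mathlib


/-- Fluid-limit treatment effect at server-to-user ratio `x`:
`θ*(x) = xμp/(λ+τ)` for `x ≤ r`, `θ*(x) = λμp/((λ+τ)(λ+τ+μp))` for `x ≥ r`. -/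
noncomputable def thetaStar (lam mu tau p x : ℝ) : ℝ :=
  if x ≤ lam / (lam + tau + mu * p) then x * (mu * p) / (lam + tau)
  else lam * (mu * p) / ((lam + tau) * (lam + tau + mu * p))

lemma thetaStar_of_ge (lam mu tau p x : ℝ)
    (hlam : 0 < lam) (hmu : 0 < mu) (htau : 0 < tau) (hp : 0 < p)
    (h : lam / (lam + tau + mu * p) ≤ x) :
    thetaStar lam mu tau p x = lam * (mu * p) / ((lam + tau) * (lam + tau + mu * p)) := by
  have hd : 0 < lam + tau + mu * p := by positivity
  unfold thetaStar
  split_ifs with h'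
  · have hxeq : x = lam / (lam + tau + mu * p) := le_antisymm h' h
    rw [hxeq]
    field_simp
  · rfl

/-- Bias of the mean-field estimator `B = θ*(M/N) − θ*(M'/N')` where `M/N` is
the experiment's server-to-user ratio and `M'/N'` the scaled-up ratio:
zero when both ratios are at least `r`; negative (experiment underestimates)
when `M/N < r ≤ M'/N'`, with explicit value; and negative with value
`((M/N)−(M'/N'))μp/(λ+τ)` when both ratios are below `r` and `M/N < M'/N'`. -/
theorem mean_field_bias (lam mu tau p : ℝ)
    (hlam : 0 < lam) (hmu : 0 < mu) (htau : 0 < tau) (hp : 0 < p) (hp1 : p ≤ 1)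
    (x x' : ℝ) (hx : 0 ≤ x) (hx' : 0 ≤ x') :
    (lam / (lam + tau + mu * p) ≤ x → lam / (lam + tau + mu * p) ≤ x' →
      thetaStar lam mu tau p x - thetaStar lam mu tau p x' = 0) ∧
    (x < lam / (lam + tau + mu * p) → lam / (lam + tau + mu * p) ≤ x' →
      thetaStar lam mu tau p x - thetaStar lam mu tau p x' =
        x * (mu * p) / (lam + tau) -
          lam * (mu * p) / ((lam + tau) * (lam + tau + mu * p)) ∧
      thetaStar lam mu tau p x - thetaStar lam mu tau p x' < 0) ∧
    (x < lam / (lam + tau + mu * p) → x' < lam / (lam + tau + mu * p) →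
      x < x' →
      thetaStar lam mu tau p x - thetaStar lam mu tau p x' =
        (x - x') * (mu * p) / (lam + tau) ∧
      thetaStar lam mu tau p x - thetaStar lam mu tau p x' < 0) := by
  have hd : 0 < lam + tau + mu * p := by positivity
  have hlt : 0 < lam + tau := by positivity
  have hmp : 0 < mu * p := by positivity
  refine ⟨?_, ?_, ?_⟩
  · intro h1 h2
    rw [thetaStar_of_ge lam mu tau p x hlam hmu htau hp h1,
        thetaStar_of_ge lam mu tau p x' hlam hmu htau hp h2]
    ring
  · intro h1 h2
    have hxlt : thetaStar lam mu tau p x = x * (mu * p) / (lam + tau) := by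
      unfold thetaStar; rw [if_pos h1.le]
    rw [hxlt, thetaStar_of_ge lam mu tau p x' hlam hmu htau hp h2]
    refine ⟨rfl, ?_⟩
    have key : x * (mu * p) / (lam + tau) < lam * (mu * p) / ((lam + tau) * (lam + tau + mu * p)) := by
      rw [div_lt_div_iff₀ hlt (by positivity)]
      nlinarith [mul_lt_mul_of_pos_right ((lt_div_iff₀ hd).mp h1) hmp]
    linarith
  · intro h1 h2 h3
    have hxlt : thetaStar lam mu tau p x = x * (mu * p) / (lam + tau) := by
      unfold thetaStar; rw [if_pos h1.le]
    have hxlt' : thetaStar lam mu tau p x' = x' * (mu * p) / (lam + tau) := by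
      unfold thetaStar; rw [if_pos h2.le]
    rw [hxlt, hxlt']
    constructor
    · ring
    · have : x * (mu * p) < x' * (mu * p) := by nlinarith
      rw [sub_neg, div_lt_div_iff₀ hlt hlt]
      nlinarith
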